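/- Quadratic closeness for the adjoint eigenfunctions (Remark 3.21(i)). Let N ∈ ℕ and let (μₙ)_{n ∈ ℤ, |n| > N} be complex numbers such that |μₙ − n| ≤ |aₙ(K)| ≤ 1/(4π) for all |n| > N. For n ∈ ℤ define ψₙ(x) = (2π)^{−1/2} e^{−inx} and, for |n| > N, define φ̃ₙ(x) = (2π)^{−1/2} e^{−iμₙ x}. Then Σ_{|n| > N} ‖ψₙ − φ̃ₙ‖²_{L²(0,2π)} < ∞. -/

import Mathlib

open MeasureTheory Real Complex

/-- `aₙ(K) = (2π)^{−1/2} ∫₀^{2π} e^{int} K(t) dt`. -/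
noncomputable def aCoeff (K : ℝ → ℂ) (n : ℤ) : ℂ :=
  (Real.sqrt (2 * Real.pi))⁻¹ * ∫ t in (0:ℝ)..(2 * Real.pi), Complex.exp (Complex.I * n * t) * K t

/-! Bessel's inequality for the orthonormal family `ψₙ` in `L²(0, 2π)` gives `∑ |aₙ(K)|² < ∞`,
since `aₙ(K) = ⟨ψₙ, K⟩`. On `[0, 2π]` the exponent of `e^{-inx} - e^{-iμₙx}` differs from the
purely imaginary `-inx` by at most `2π |μₙ - n| ≤ 1/2`, so `|e^u - e^v| ≤ 2 |u - v|` yields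
`‖ψₙ - φ̃ₙ‖² ≤ 16π² |μₙ - n|² ≤ 16π² |aₙ(K)|²`, and the series is dominated by a convergent one. -/

open Set intervalIntegral

local notation "μ₀" => volume.restrict (Ioo (0:ℝ) (2 * π))

/-- `expMode n` is `ψₙ` and `expMode (μₙ)` is `φ̃ₙ`. -/
noncomputable def expMode (z : ℂ) (x : ℝ) : ℂ :=
  (Real.sqrt (2 * Real.pi))⁻¹ * Complex.exp (-(Complex.I * z * x))

lemma continuous_expMode (z : ℂ) : Continuous (expMode z) := by
  unfold expMode
  fun_prop

lemma norm_expMode_intCast (n : ℤ) (x : ℝ) : ‖expMode n x‖ = (√(2 * π))⁻¹ := by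
  rw [expMode, norm_mul, Complex.norm_exp, Complex.norm_real, Real.norm_of_nonneg (by positivity)]
  simp

lemma memLp_expMode_intCast (n : ℤ) : MemLp (expMode n) 2 μ₀ :=
  have : IsFiniteMeasure μ₀ := isFiniteMeasure_restrict.mpr measure_Ioo_lt_top.ne
  .of_bound (continuous_expMode n).aestronglyMeasurable _
    (ae_of_all _ fun x => (norm_expMode_intCast n x).le)

lemma integral_exp_I_mul_intCast (k : ℤ) :
    ∫ x in (0:ℝ)..(2 * π), Complex.exp (I * k * x) = if k = 0 then (2 * π : ℂ) else 0 := by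
  split_ifs with hk
  · simp [hk]
  · have hc : I * k ≠ 0 := by simp [hk]
    have hperiod : Complex.exp (I * k * (2 * π)) = 1 := by
      rw [← exp_int_mul_two_pi_mul_I k]
      ring_nf
    simp [integral_exp_mul_complex hc, hperiod]

lemma inner_toLp_expMode {f : ℝ → ℂ} (hf : MemLp f 2 μ₀) (n : ℤ) :
    inner ℂ ((memLp_expMode_intCast n).toLp _) (hf.toLp f) =
      (√(2 * π))⁻¹ * ∫ x in (0:ℝ)..(2 * π), Complex.exp (I * n * x) * f x := by
  rw [L2.inner_def, integral_of_le two_pi_pos.le, integral_Ioc_eq_integral_Ioo,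
    ← MeasureTheory.integral_const_mul]
  refine integral_congr_ae ?_
  filter_upwards [(memLp_expMode_intCast n).coeFn_toLp, hf.coeFn_toLp] with x hψ hf
  rw [hψ, hf, RCLike.inner_apply, expMode, map_mul, ← Complex.exp_conj]
  simp only [map_mul, map_neg, conj_ofReal, conj_I, map_intCast, neg_mul, neg_neg]
  ring

lemma orthonormal_expMode :
    Orthonormal ℂ (fun n : ℤ => (memLp_expMode_intCast n).toLp (expMode n)) := by
  rw [orthonormal_iff_ite]
  intro n m
  have hmode (x : ℝ) : Complex.exp (I * n * x) * expMode m x =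
      (√(2 * π))⁻¹ * Complex.exp (I * (n - m : ℤ) * x) := by
    rw [expMode, mul_left_comm, ← Complex.exp_add]
    push_cast
    ring_nf
  simp only [inner_toLp_expMode, hmode, intervalIntegral.integral_const_mul,
    integral_exp_I_mul_intCast, sub_eq_zero]
  split_ifs
  · rw [← mul_assoc, ← ofReal_mul, ← mul_inv, mul_self_sqrt two_pi_pos.le]
    push_cast
    exact inv_mul_cancel₀ (by simp [pi_ne_zero])
  · simp

lemma summable_sq_norm_aCoeff {K : ℝ → ℂ} (hK : MemLp K 2 μ₀) :
    Summable fun n => ‖aCoeff K n‖ ^ 2 :=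
  (orthonormal_expMode.inner_products_summable (hK.toLp K)).congr fun n => by
    rw [inner_toLp_expMode hK, aCoeff]

lemma norm_exp_sub_exp_le {u v : ℂ} (hu : u.re = 0) (h : ‖v - u‖ ≤ 1) :
    ‖Complex.exp u - Complex.exp v‖ ≤ 2 * ‖v - u‖ :=
  calc ‖Complex.exp u - Complex.exp v‖ = ‖Complex.exp u‖ * ‖Complex.exp (v - u) - 1‖ := by
        rw [← norm_mul, mul_sub, ← Complex.exp_add, add_sub_cancel, mul_one, ← norm_neg, neg_sub]
    _ ≤ 2 * ‖v - u‖ := by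
        rw [Complex.norm_exp, hu, Real.exp_zero, one_mul]
        exact norm_exp_sub_one_le h

lemma norm_expMode_sub_le (n : ℤ) {w : ℂ} (hw : ‖w - n‖ ≤ 1 / (2 * π)) {x : ℝ}
    (hx : x ∈ Icc 0 (2 * π)) :
    ‖expMode n x - expMode w x‖ ≤ (√(2 * π))⁻¹ * (4 * π * ‖w - n‖) := by
  have hdiff : ‖-(I * w * x) - -(I * n * x)‖ = ‖w - n‖ * x := by
    rw [show -(I * w * x) - -(I * n * x) = -(I * (w - n) * x) by ring, norm_neg, norm_mul,
      norm_mul, norm_I, one_mul, norm_real, Real.norm_of_nonneg hx.1]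
  have hdiff_le : ‖w - n‖ * x ≤ 1 :=
    calc ‖w - n‖ * x ≤ 1 / (2 * π) * (2 * π) := mul_le_mul hw hx.2 hx.1 (by positivity)
      _ = 1 := by field_simp
  rw [expMode, expMode, ← mul_sub, norm_mul, norm_real, Real.norm_of_nonneg (by positivity)]
  gcongr
  calc _ ≤ 2 * (‖w - n‖ * x) := hdiff ▸ norm_exp_sub_exp_le (by simp) (hdiff ▸ hdiff_le)
    _ ≤ 2 * (‖w - n‖ * (2 * π)) := by gcongr; exact hx.2
    _ = 4 * π * ‖w - n‖ := by ring

lemma integral_sq_norm_expMode_sub_le (n : ℤ) {w : ℂ} (hw : ‖w - n‖ ≤ 1 / (2 * π)) :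
    ∫ x in (0:ℝ)..(2 * π), ‖expMode n x - expMode w x‖ ^ 2 ≤ 16 * π ^ 2 * ‖w - n‖ ^ 2 :=
  calc ∫ x in (0:ℝ)..(2 * π), ‖expMode n x - expMode w x‖ ^ 2
      ≤ ∫ _ in (0:ℝ)..(2 * π), ((√(2 * π))⁻¹ * (4 * π * ‖w - n‖)) ^ 2 := by
        refine integral_mono_on two_pi_pos.le ?_ intervalIntegrable_const fun x hx => ?_
        · exact ((continuous_expMode n).sub (continuous_expMode w)).norm.pow 2
            |>.intervalIntegrable _ _
        · gcongr
          exact norm_expMode_sub_le n hw hx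
    _ = 16 * π ^ 2 * ‖w - n‖ ^ 2 := by
        rw [intervalIntegral.integral_const, smul_eq_mul, sub_zero, mul_pow, inv_pow,
          sq_sqrt two_pi_pos.le]
        field_simp
        ring

theorem adjoint_eigenfunctions_quadratically_close
    (K : ℝ → ℂ)
    (hK : MeasureTheory.MemLp K 2 (MeasureTheory.volume.restrict (Set.Ioo 0 (2 * Real.pi))))
    (N : ℕ) (mu : ℤ → ℂ)
    (hclose : ∀ n : ℤ, (N : ℤ) < |n| → ‖mu n - n‖ ≤ ‖aCoeff K n‖)
    (hsmall : ∀ n : ℤ, (N : ℤ) < |n| → ‖aCoeff K n‖ ≤ 1 / (4 * Real.pi)) :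
    Summable (fun n : {m : ℤ // (N : ℤ) < |m|} =>
      ∫ x in (0:ℝ)..(2 * Real.pi),
        ‖(Real.sqrt (2 * Real.pi))⁻¹ * Complex.exp (-(Complex.I * (n : ℤ) * x))
          - (Real.sqrt (2 * Real.pi))⁻¹ * Complex.exp (-(Complex.I * mu n * x))‖ ^ 2) := by
  have hbessel := (summable_sq_norm_aCoeff hK).comp_injective
    (Subtype.val_injective (p := fun m : ℤ => (N : ℤ) < |m|))
  refine .of_nonneg_of_le (fun _ => integral_nonneg two_pi_pos.le fun _ _ => by positivity)
    (fun ⟨n, hn⟩ => ?_) (hbessel.mul_left (16 * π ^ 2))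
  have hw : ‖mu n - n‖ ≤ 1 / (2 * π) :=
    (hclose n hn).trans <| (hsmall n hn).trans <| by gcongr; linarith
  calc _ ≤ 16 * π ^ 2 * ‖mu n - n‖ ^ 2 := integral_sq_norm_expMode_sub_le n hw
    _ ≤ 16 * π ^ 2 * ‖aCoeff K n‖ ^ 2 := by gcongr; exact hclose n hn
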